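/- arXiv:1206.1001 — 2 statements merged into one kernel-verified Lean document; each statement's English description precedes it below -/
import Mathlib

section
/- Let Γ ⊆ ℂ^m be a nonempty closed convex set, Φ and Λ unitary m×m matrices, Y ∈ ℝ^m with Y_j ≥ 0, and θ ∈ ℝ^m. If f ∈ Γ and f⁺ = P_o(P_f^θ f), then ε_f(f⁺) ≤ ε_f(f), with equality if and only if f⁺ = f. (One step of the Error-Reduction iteration does not increase the frequency-domain error, and the error strictly decreases unless a fixed point has been reached.) -/
open Complex

/-- Euclidean norm on `ℂ^m`. -/
noncomputable def enorm' {m : ℕ} (x : Fin m → ℂ) : ℝ :=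
  Real.sqrt (∑ j, ‖x j‖ ^ 2)

/-- The intensity-fitting map `T^θ`: replace each coordinate's modulus by `Y_j`,
keeping its phase; where the coordinate vanishes, impose the phase `θ_j`. -/
noncomputable def intensityFit {m : ℕ} (Y : Fin m → ℝ) (θ : Fin m → ℝ)
    (G : Fin m → ℂ) : Fin m → ℂ :=
  fun j => if G j = 0 then (Y j : ℂ) * Complex.exp (Complex.I * θ j)
    else (Y j : ℂ) * (G j / (‖G j‖ : ℂ))

/-- The frequency-domain projection `P_f^θ = Λ⁻¹ Φ⁻¹ T^θ Φ Λ` (for unitary `Φ, Λ`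
the inverses are the conjugate transposes). -/
noncomputable def freqProj {m : ℕ} (Φ Λ : Matrix (Fin m) (Fin m) ℂ)
    (Y : Fin m → ℝ) (θ : Fin m → ℝ) (h : Fin m → ℂ) : Fin m → ℂ :=
  (Matrix.conjTranspose Λ).mulVec ((Matrix.conjTranspose Φ).mulVec (intensityFit Y θ (Φ.mulVec (Λ.mulVec h))))

/-- The frequency-domain error `ε_f(h) = ‖Y − |ΦΛh|‖`. -/
noncomputable def epsF {m : ℕ} (Φ Λ : Matrix (Fin m) (Fin m) ℂ)
    (Y : Fin m → ℝ) (h : Fin m → ℂ) : ℝ :=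
  Real.sqrt (∑ j, (Y j - ‖(Φ.mulVec (Λ.mulVec h)) j‖) ^ 2)

/-! As `ΦΛ` is unitary, `ΦΛ (P_f^θ f) = T^θ(ΦΛ f)`, so `‖h - P_f^θ f‖ = ‖ΦΛh - T^θ(ΦΛf)‖`.
Coordinatewise `|Y_j - |H_j|| = ||T_j| - |H_j|| ≤ |T_j - H_j|`, with equality when `H = ΦΛf`;
hence `ε_f(h) ≤ ‖h - P_f^θ f‖` for every `h`, with equality at `h = f`. Since `f⁺` is the point
of `Γ` nearest to `P_f^θ f` and `f ∈ Γ`,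
`ε_f(f⁺) ≤ ‖f⁺ - P_f^θ f‖ ≤ ‖f - P_f^θ f‖ = ε_f(f)`. If equality holds, `f` is also a nearest
point, and nearest points to a convex set in a strictly convex space are unique. -/

open Matrix WithLp

theorem Convex.eq_of_norm_sub_le_of_forall_norm_sub_le {E : Type*} [NormedAddCommGroup E]
    [NormedSpace ℝ E] [StrictConvexSpace ℝ E] {K : Set E} (hK : Convex ℝ K) {g x y : E}
    (hx : x ∈ K) (hy : y ∈ K) (hmin : ∀ z ∈ K, ‖y - g‖ ≤ ‖z - g‖)
    (hle : ‖x - g‖ ≤ ‖y - g‖) : x = y := by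
  by_contra hne
  have hmid : (1 / 2 : ℝ) • x + (1 / 2 : ℝ) • y ∈ K :=
    hK hx hy (by norm_num) (by norm_num) (by norm_num)
  have hlt : ‖(1 / 2 : ℝ) • (x - g) + (1 / 2 : ℝ) • (y - g)‖ < ‖y - g‖ :=
    norm_combo_lt_of_ne hle le_rfl (sub_left_injective.ne hne) (by norm_num) (by norm_num)
      (by norm_num)
  have hcombo : (1 / 2 : ℝ) • (x - g) + (1 / 2 : ℝ) • (y - g)
      = (1 / 2 : ℝ) • x + (1 / 2 : ℝ) • y - g := by
    module
  exact (hmin _ hmid).not_gt (hcombo ▸ hlt)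

lemma enorm'_eq_norm_toLp {m : ℕ} (x : Fin m → ℂ) : enorm' x = ‖toLp 2 x‖ := by
  simp [enorm', EuclideanSpace.norm_eq]

lemma enorm'_mulVec_of_mem_unitaryGroup {m : ℕ} {U : Matrix (Fin m) (Fin m) ℂ}
    (hU : U ∈ unitaryGroup (Fin m) ℂ) (x : Fin m → ℂ) : enorm' (U *ᵥ x) = enorm' x := by
  rw [enorm'_eq_norm_toLp, enorm'_eq_norm_toLp, ← toEuclideanCLM_toLp]
  exact ContinuousLinearMap.norm_map_of_mem_unitary (Unitary.map_mem toEuclideanCLM hU) _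

lemma Convex.eq_of_enorm'_sub_le_of_forall_enorm'_sub_le {m : ℕ} {Γ : Set (Fin m → ℂ)}
    (hΓ : Convex ℝ Γ) {g x y : Fin m → ℂ} (hx : x ∈ Γ) (hy : y ∈ Γ)
    (hmin : ∀ z ∈ Γ, enorm' (y - g) ≤ enorm' (z - g))
    (hle : enorm' (x - g) ≤ enorm' (y - g)) : x = y := by
  simp only [enorm'_eq_norm_toLp, toLp_sub] at hmin hle
  have hK : Convex ℝ (toLp 2 '' Γ) :=
    hΓ.linear_image (WithLp.linearEquiv 2 ℝ (Fin m → ℂ)).symm.toLinearMap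
  refine toLp_injective 2 <| hK.eq_of_norm_sub_le_of_forall_norm_sub_le (g := toLp 2 g)
    (Set.mem_image_of_mem _ hx) (Set.mem_image_of_mem _ hy) ?_ hle
  rintro _ ⟨z, hz, rfl⟩
  exact hmin z hz

lemma norm_intensityFit_apply {m : ℕ} {Y : Fin m → ℝ} (θ : Fin m → ℝ) (G : Fin m → ℂ)
    {j : Fin m} (hY : 0 ≤ Y j) : ‖intensityFit Y θ G j‖ = Y j := by
  by_cases h : G j = 0
  · simp [intensityFit, h, Complex.norm_exp, abs_of_nonneg hY]
  · simp [intensityFit, h, abs_of_nonneg hY]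

lemma norm_intensityFit_sub_apply {m : ℕ} {Y : Fin m → ℝ} (θ : Fin m → ℝ) (G : Fin m → ℂ)
    {j : Fin m} (hY : 0 ≤ Y j) : ‖intensityFit Y θ G j - G j‖ = |Y j - ‖G j‖| := by
  by_cases h : G j = 0
  · simp [intensityFit, h, Complex.norm_exp, abs_of_nonneg hY]
  · have hG : (‖G j‖ : ℂ) ≠ 0 := by exact_mod_cast norm_ne_zero_iff.mpr h
    have hphase : (Y j : ℂ) * (G j / ‖G j‖) - G j = ((Y j - ‖G j‖ : ℝ) : ℂ) * (G j / ‖G j‖) := by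
      push_cast; field_simp
    rw [intensityFit, if_neg h, hphase, norm_mul, norm_div, Complex.norm_real, Complex.norm_real,
      Real.norm_eq_abs, norm_norm, div_self (norm_ne_zero_iff.mpr h), mul_one]

lemma sqrt_sum_sq_sub_norm_le_enorm'_sub_intensityFit {m : ℕ} {Y : Fin m → ℝ}
    (hY : ∀ j, 0 ≤ Y j) (θ : Fin m → ℝ) (G H : Fin m → ℂ) :
    √(∑ j, (Y j - ‖H j‖) ^ 2) ≤ enorm' (H - intensityFit Y θ G) := by
  refine Real.sqrt_le_sqrt <| Finset.sum_le_sum fun j _ => ?_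
  rw [← sq_abs, Pi.sub_apply, norm_sub_rev, ← norm_intensityFit_apply θ G (hY j)]
  exact pow_le_pow_left₀ (abs_nonneg _) (abs_norm_sub_norm_le _ _) 2

lemma sqrt_sum_sq_sub_norm_eq_enorm'_sub_intensityFit {m : ℕ} {Y : Fin m → ℝ}
    (hY : ∀ j, 0 ≤ Y j) (θ : Fin m → ℝ) (G : Fin m → ℂ) :
    √(∑ j, (Y j - ‖G j‖) ^ 2) = enorm' (G - intensityFit Y θ G) := by
  refine congrArg _ <| Finset.sum_congr rfl fun j _ => ?_
  rw [Pi.sub_apply, norm_sub_rev, norm_intensityFit_sub_apply θ G (hY j), sq_abs]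

lemma enorm'_sub_freqProj {m : ℕ} {Φ Λ : Matrix (Fin m) (Fin m) ℂ}
    (hΦ : Φ ∈ unitaryGroup (Fin m) ℂ) (hΛ : Λ ∈ unitaryGroup (Fin m) ℂ) (Y θ : Fin m → ℝ)
    (f h : Fin m → ℂ) :
    enorm' (h - freqProj Φ Λ Y θ f)
      = enorm' (Φ *ᵥ Λ *ᵥ h - intensityFit Y θ (Φ *ᵥ Λ *ᵥ f)) := by
  have hfit : Φ *ᵥ Λ *ᵥ freqProj Φ Λ Y θ f = intensityFit Y θ (Φ *ᵥ Λ *ᵥ f) := by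
    have hΦΦ : Φ * Φᴴ = 1 := Unitary.mul_star_self_of_mem hΦ
    have hΛΛ : Λ * Λᴴ = 1 := Unitary.mul_star_self_of_mem hΛ
    rw [freqProj, mulVec_mulVec _ Λ, hΛΛ, one_mulVec, mulVec_mulVec, hΦΦ, one_mulVec]
  rw [← enorm'_mulVec_of_mem_unitaryGroup hΛ, ← enorm'_mulVec_of_mem_unitaryGroup hΦ,
    mulVec_sub, mulVec_sub, hfit]

lemma epsF_le_enorm'_sub_freqProj {m : ℕ} {Φ Λ : Matrix (Fin m) (Fin m) ℂ}
    (hΦ : Φ ∈ unitaryGroup (Fin m) ℂ) (hΛ : Λ ∈ unitaryGroup (Fin m) ℂ) {Y : Fin m → ℝ}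
    (hY : ∀ j, 0 ≤ Y j) (θ : Fin m → ℝ) (f h : Fin m → ℂ) :
    epsF Φ Λ Y h ≤ enorm' (h - freqProj Φ Λ Y θ f) := by
  rw [enorm'_sub_freqProj hΦ hΛ]
  exact sqrt_sum_sq_sub_norm_le_enorm'_sub_intensityFit hY θ _ _

lemma epsF_eq_enorm'_sub_freqProj {m : ℕ} {Φ Λ : Matrix (Fin m) (Fin m) ℂ}
    (hΦ : Φ ∈ unitaryGroup (Fin m) ℂ) (hΛ : Λ ∈ unitaryGroup (Fin m) ℂ) {Y : Fin m → ℝ}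
    (hY : ∀ j, 0 ≤ Y j) (θ : Fin m → ℝ) (f : Fin m → ℂ) :
    epsF Φ Λ Y f = enorm' (f - freqProj Φ Λ Y θ f) := by
  rw [enorm'_sub_freqProj hΦ hΛ]
  exact sqrt_sum_sq_sub_norm_eq_enorm'_sub_intensityFit hY θ _

theorem error_reduction_step_decreases_error_general
    (m : ℕ)
    (Γ : Set (Fin m → ℂ))
    (hΓconvex : Convex ℝ Γ)
    (Φ Λ : Matrix (Fin m) (Fin m) ℂ)
    (hΦ : Φ ∈ Matrix.unitaryGroup (Fin m) ℂ)
    (hΛ : Λ ∈ Matrix.unitaryGroup (Fin m) ℂ)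
    (Y : Fin m → ℝ) (hY : ∀ j, 0 ≤ Y j)
    (θ : Fin m → ℝ)
    (Po : (Fin m → ℂ) → (Fin m → ℂ))
    (hPo : ∀ x, Po x ∈ Γ ∧ ∀ y ∈ Γ, enorm' (Po x - x) ≤ enorm' (y - x))
    (f fplus : Fin m → ℂ) (hf : f ∈ Γ)
    (hstep : fplus = Po (freqProj Φ Λ Y θ f)) :
    epsF Φ Λ Y fplus ≤ epsF Φ Λ Y f ∧
      (epsF Φ Λ Y fplus = epsF Φ Λ Y f ↔ fplus = f) := by
  set g := freqProj Φ Λ Y θ f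
  obtain ⟨hfplus, hmin⟩ : fplus ∈ Γ ∧ ∀ y ∈ Γ, enorm' (fplus - g) ≤ enorm' (y - g) :=
    hstep ▸ hPo g
  have hεf : epsF Φ Λ Y f = enorm' (f - g) := epsF_eq_enorm'_sub_freqProj hΦ hΛ hY θ f
  have hεfplus : epsF Φ Λ Y fplus ≤ enorm' (fplus - g) :=
    epsF_le_enorm'_sub_freqProj hΦ hΛ hY θ f fplus
  have hdecrease : epsF Φ Λ Y fplus ≤ epsF Φ Λ Y f := hεfplus.trans (hεf ▸ hmin f hf)
  refine ⟨hdecrease, fun heq => ?_, fun h => h ▸ rfl⟩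
  have hfnearest : enorm' (f - g) ≤ enorm' (fplus - g) := hεf ▸ heq ▸ hεfplus
  exact (hΓconvex.eq_of_enorm'_sub_le_of_forall_enorm'_sub_le hf hfplus hmin hfnearest).symm

/-- One step of the Error-Reduction iteration does not increase the
frequency-domain error, with equality exactly at a fixed point. -/
theorem error_reduction_step_decreases_error
    (m : ℕ) (hm : 1 ≤ m)
    (Γ : Set (Fin m → ℂ)) (hΓne : Γ.Nonempty) (hΓclosed : IsClosed Γ)
    (hΓconvex : Convex ℝ Γ)
    (Φ Λ : Matrix (Fin m) (Fin m) ℂ)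
    (hΦ : Φ ∈ Matrix.unitaryGroup (Fin m) ℂ)
    (hΛ : Λ ∈ Matrix.unitaryGroup (Fin m) ℂ)
    (Y : Fin m → ℝ) (hY : ∀ j, 0 ≤ Y j)
    (θ : Fin m → ℝ)
    (Po : (Fin m → ℂ) → (Fin m → ℂ))
    (hPo : ∀ x, Po x ∈ Γ ∧ ∀ y ∈ Γ, enorm' (Po x - x) ≤ enorm' (y - x))
    (f fplus : Fin m → ℂ) (hf : f ∈ Γ)
    (hstep : fplus = Po (freqProj Φ Λ Y θ f)) :
    epsF Φ Λ Y fplus ≤ epsF Φ Λ Y f ∧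
      (epsF Φ Λ Y fplus = epsF Φ Λ Y f ↔ fplus = f) :=
  error_reduction_step_decreases_error_general m Γ hΓconvex Φ Λ hΦ hΛ Y hY θ Po hPo f fplus hf hstep
end

section
/- Let f ∈ C(𝒩) have at least three nonzero entries (this holds in particular when f has rank ≥ 2), and extend λ : 𝒩 → 𝕊¹ by λ(m) = 1 for m ∉ 𝒩. Then for μ-almost every λ ∈ (𝕊¹)^𝒩: for every t ∈ ℤ^d, neither the array n ↦ λ(t+n) f(t+n) nor the array n ↦ conj(λ(t−n) f(t−n)) is conjugate symmetric. (The z-transform of every shift of the randomly illuminated image, and of its conjugate inversion, is almost surely not conjugate symmetric.) -/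
open MeasureTheory Complex

noncomputable instance : MeasurableSpace Circle := borel Circle
instance : BorelSpace Circle := ⟨rfl⟩

/-- The box `𝒩 = {n ∈ ℤ^d : 0 ≤ n_j ≤ N_j}`. -/
def inBox {d : ℕ} (N : Fin d → ℕ) (n : Fin d → ℤ) : Prop :=
  ∀ j, 0 ≤ n j ∧ n j ≤ (N j : ℤ)

/-- Extension of an illumination `λ : 𝒩 → 𝕊¹` to all of `ℤ^d` by `λ(m) = 1` outside `𝒩`. -/
noncomputable def illumExt {d : ℕ} (N : Fin d → ℕ)
    (lam : (∀ j, Fin (N j + 1)) → Circle) (m : Fin d → ℤ) : ℂ :=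
  if h : ∀ j, 0 ≤ m j ∧ m j ≤ (N j : ℤ) then
    (lam (fun j => ⟨(m j).toNat, by have h1 := (h j).1; have h2 := (h j).2; omega⟩) : ℂ)
  else 1

/-- A finitely supported array `a : ℤ^d → ℂ` is conjugate symmetric if
`a(n) = e^{iθ} conj(a(k−n))` for all `n`, for some `θ ∈ [0,2π)` and some `k ∈ ℤ^d`
with all `k_j ≥ 1`. -/
def ConjSymmetricArr {d : ℕ} (a : (Fin d → ℤ) → ℂ) : Prop :=
  ∃ θ : ℝ, 0 ≤ θ ∧ θ < 2 * Real.pi ∧ ∃ k : Fin d → ℤ, (∀ j, 1 ≤ k j) ∧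
    ∀ n : Fin d → ℤ, a n = Complex.exp (Complex.I * θ) *
      (starRingEnd ℂ) (a (fun j => k j - n j))

/-!
If the illuminated image `g = λ f` satisfies `g m = c · conj (g (s - m))` for all `m`, then
`|λ| = 1` gives `λ m · λ (s - m) · f m = c · conj (f (s - m))`. Hence the support of `f` is
symmetric about `s / 2`, and for any two support points `u, v` the product `λ u · λ (s - u)`
equals `λ v · λ (s - v)` times a constant determined by `f`. With three support points we can
take `v ∉ {u, s - u}`; then, given all other pixels, `λ u` is confined to at most two values, an
event of probability zero because `μ_u` has no atoms. Every conjugate symmetric shift or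
conjugate inversion yields such a centre `s`, and there are only countably many of them.
-/

open ComplexConjugate Function

theorem MeasureTheory.Measure.pi_eq_zero_of_forall_slice {ι : Type*} [Fintype ι]
    [DecidableEq ι] {α : ι → Type*} [∀ i, MeasurableSpace (α i)] (μ : ∀ i, Measure (α i))
    [∀ i, SigmaFinite (μ i)] {E : Set (∀ i, α i)} (hE : MeasurableSet E) (i : ι)
    (h : ∀ x, μ i {y | update x i y ∈ E} = 0) : Measure.pi μ E = 0 := by
  rcases E.eq_empty_or_nonempty with rfl | ⟨x₀, -⟩
  · exact measure_empty
  have hslice (x : ∀ i, α i) : ∫⁻ y, E.indicator 1 (update x i y) ∂μ i = 0 :=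
    nonpos_iff_eq_zero.1 <| (lintegral_indicator_one_le _).trans (h x).le
  calc Measure.pi μ E = (∫⋯∫⁻_Finset.univ, E.indicator 1 ∂μ) x₀ := by
        simp [lintegral_indicator_one hE]
    _ = 0 := by
        rw [lmarginal_erase' _ (measurable_one.indicator hE) (Finset.mem_univ i)]
        simp [hslice, lmarginal]

theorem Circle.finite_setOf_coe_pow_eq {n : ℕ} (hn : n ≠ 0) (z : ℂ) :
    {y : Circle | (y : ℂ) ^ n = z}.Finite :=
  ((Polynomial.nthRoots n z).toFinset.finite_toSet.preimage Circle.coe_injective.injOn).subset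
    fun y (hy : (y : ℂ) ^ n = z) => by simpa [Polynomial.mem_nthRoots (Nat.pos_of_ne_zero hn)]

theorem Circle.subsingleton_setOf_coe_mul_eq (w : Circle) (z : ℂ) :
    {y : Circle | (y : ℂ) * w = z}.Subsingleton := fun _ hy _ hy' =>
  Circle.coe_injective <| mul_right_cancel₀ w.coe_ne_zero (hy.trans hy'.symm)

theorem measure_pi_setOf_coe_mul_eq_null {ι : Type*} [Fintype ι] [DecidableEq ι]
    (μ : ι → Measure Circle) [∀ i, SigmaFinite (μ i)] [∀ i, NullSingletonClass (μ i)]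
    {F : (ι → Circle) → ℂ} (hF : Measurable F) {i : ι} (hFi : ∀ x y, F (update x i y) = F x)
    (j : ι) : Measure.pi μ {x | (x i : ℂ) * x j = F x} = 0 := by
  have hcoe : Measurable (fun y : Circle => (y : ℂ)) := by fun_prop
  refine Measure.pi_eq_zero_of_forall_slice μ (measurableSet_eq_fun
    ((hcoe.comp (measurable_pi_apply i)).mul
      (hcoe.comp (measurable_pi_apply j))) hF) i
    fun x => Set.Countable.measure_zero ?_ _
  refine ((Circle.finite_setOf_coe_pow_eq two_ne_zero (F x)).countable.union
    (Circle.subsingleton_setOf_coe_mul_eq (x j) (F x)).countable).mono fun y hy => ?_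
  simp only [Set.mem_ofPred_eq, hFi, update_self, update_apply] at hy
  split_ifs at hy with hji
  · exact Or.inl (by simpa [sq] using hy)
  · exact Or.inr hy

section ConjSymmetric

variable {G : Type*} [AddCommGroup G]

def ConjSymmetricAbout (g : G → ℂ) (s : G) : Prop :=
  ∃ c ≠ 0, ∀ m, g m = c * conj (g (s - m))

variable {L f : G → ℂ} {s : G}

theorem ConjSymmetricAbout.apply_sub_ne_zero (h : ConjSymmetricAbout (fun m => L m * f m) s)
    (hL : ∀ m, L m ≠ 0) {m : G} (hm : f m ≠ 0) : f (s - m) ≠ 0 := by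
  obtain ⟨c, -, hc⟩ := h
  intro hsm
  simpa [hsm, hL m, hm] using hc m

theorem ConjSymmetricAbout.mul_apply_sub_eq (h : ConjSymmetricAbout (fun m => L m * f m) s)
    (hL : ∀ m, ‖L m‖ = 1) {u v : G} (hu : f u ≠ 0) (hv : f v ≠ 0) :
    L u * L (s - u) = L v * L (s - v) * (f v * conj (f (s - u)) / (f u * conj (f (s - v)))) := by
  have hsv : conj (f (s - v)) ≠ 0 :=
    (map_ne_zero _).2 <| h.apply_sub_ne_zero (fun m => norm_ne_zero_iff.1 (by simp [hL])) hv
  obtain ⟨c, -, hc⟩ := h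
  have hpair (m : G) : L m * L (s - m) * f m = c * conj (f (s - m)) := by
    have hunit : L (s - m) * conj (L (s - m)) = 1 := by
      rw [mul_conj, normSq_eq_norm_sq, hL]; norm_num
    have hm := hc m
    rw [map_mul] at hm
    linear_combination L (s - m) * hm + c * conj (f (s - m)) * hunit
  field_simp
  linear_combination conj (f (s - v)) * hpair u - conj (f (s - u)) * hpair v

end ConjSymmetric

section Reduction

variable {d : ℕ} {g : (Fin d → ℤ) → ℂ} {t : Fin d → ℤ}

theorem ConjSymmetricArr.exists_conjSymmetricAbout_of_shift
    (h : ConjSymmetricArr fun n => g (t + n)) : ∃ s, ConjSymmetricAbout g s := by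
  obtain ⟨θ, -, -, k, -, hk⟩ := h
  refine ⟨t + t + k, exp (I * θ), exp_ne_zero _, fun m => ?_⟩
  have hm := hk (m - t)
  beta_reduce at hm
  have hkm : (t + fun j => k j - (m - t) j) = t + t + k - m := by
    ext j; simp only [Pi.add_apply, Pi.sub_apply]; ring
  rwa [show t + (m - t) = m by abel, hkm] at hm

theorem ConjSymmetricArr.exists_conjSymmetricAbout_of_conj_reflect
    (h : ConjSymmetricArr fun n => conj (g (t - n))) : ∃ s, ConjSymmetricAbout g s := by
  obtain ⟨θ, -, -, k, -, hk⟩ := h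
  refine ⟨t + t - k, (exp (I * θ))⁻¹, inv_ne_zero (exp_ne_zero _), fun m => ?_⟩
  have hm := hk (m - t + k)
  beta_reduce at hm
  have hkm : (t - fun j => k j - (m - t + k) j) = m := by
    ext j; simp only [Pi.add_apply, Pi.sub_apply]; ring
  rw [hkm, show t - (m - t + k) = t + t - k - m by abel, conj_conj] at hm
  rw [hm, inv_mul_cancel_left₀ (exp_ne_zero _)]

end Reduction

-- Outside the box the reduction mod `N j + 1` is junk; it only makes the index map total.
def boxIndex {d : ℕ} (N : Fin d → ℕ) (m : Fin d → ℤ) : ∀ j, Fin (N j + 1) :=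
  fun j => Fin.ofNat _ (m j).toNat

theorem illumExt_of_inBox {d : ℕ} {N : Fin d → ℕ} (lam : (∀ j, Fin (N j + 1)) → Circle)
    {m : Fin d → ℤ} (hm : inBox N m) : illumExt N lam m = lam (boxIndex N m) := by
  rw [illumExt, dif_pos (show ∀ j, 0 ≤ m j ∧ m j ≤ (N j : ℤ) from hm)]
  congr
  ext j
  simp [boxIndex, Nat.mod_eq_of_lt (show (m j).toNat < N j + 1 by have := hm j; omega)]

theorem boxIndex_injOn {d : ℕ} (N : Fin d → ℕ) : Set.InjOn (boxIndex N) {m | inBox N m} := by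
  intro m hm m' hm' he
  ext j
  have := congrArg Fin.val (congrFun he j)
  have := hm j
  have := hm' j
  simp only [boxIndex, Fin.val_ofNat] at *
  rw [Nat.mod_eq_of_lt (by omega), Nat.mod_eq_of_lt (by omega)] at *
  omega

theorem norm_illumExt {d : ℕ} (N : Fin d → ℕ) (lam : (∀ j, Fin (N j + 1)) → Circle)
    (m : Fin d → ℤ) : ‖illumExt N lam m‖ = 1 := by
  unfold illumExt
  split_ifs
  · exact Circle.norm_coe _
  · exact norm_one

theorem ae_not_conjSymmetricAbout_illumExt_mul {d : ℕ} {N : Fin d → ℕ}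
    {f : (Fin d → ℤ) → ℂ} (hfsupp : ∀ n, ¬ inBox N n → f n = 0)
    (hthree : ∃ a b c : Fin d → ℤ, a ≠ b ∧ a ≠ c ∧ b ≠ c ∧ f a ≠ 0 ∧ f b ≠ 0 ∧ f c ≠ 0)
    (μn : (∀ j, Fin (N j + 1)) → Measure Circle)
    [∀ n, SigmaFinite (μn n)] [∀ n, NullSingletonClass (μn n)] (s : Fin d → ℤ) :
    ∀ᵐ lam ∂(Measure.pi μn), ¬ ConjSymmetricAbout (fun m => illumExt N lam m * f m) s := by
  obtain ⟨u, v, hu, hv, hvu, hvsu⟩ : ∃ u v, f u ≠ 0 ∧ f v ≠ 0 ∧ v ≠ u ∧ v ≠ s - u := by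
    obtain ⟨a, b, c, hab, hac, hbc, ha, hb, hc⟩ := hthree
    by_cases hba : b = s - a
    · exact ⟨a, c, ha, hc, hac.symm, hba ▸ hbc.symm⟩
    · exact ⟨a, b, ha, hb, hab.symm, hba⟩
  rw [ae_iff]
  simp only [not_not]
  by_cases hsymm : f (s - u) ≠ 0 ∧ f (s - v) ≠ 0
  swap
  · refine measure_mono_null (fun lam (h : ConjSymmetricAbout _ s) => hsymm ?_) measure_empty
    have hL m : illumExt N lam m ≠ 0 := norm_ne_zero_iff.1 (by simp [norm_illumExt])
    exact ⟨h.apply_sub_ne_zero hL hu, h.apply_sub_ne_zero hL hv⟩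
  have hbox {w} (hw : f w ≠ 0) : inBox N w := by_contra (hw ∘ hfsupp w)
  have hsvu : s - v ≠ u := fun h => hvsu (by rw [← h]; abel)
  have hvi := (boxIndex_injOn N).ne (hbox hv) (hbox hu) hvu
  have hsvi := (boxIndex_injOn N).ne (hbox hsymm.2) (hbox hu) hsvu
  set K := f v * conj (f (s - u)) / (f u * conj (f (s - v)))
  refine measure_mono_null (fun lam (h : ConjSymmetricAbout _ s) => ?_)
    (measure_pi_setOf_coe_mul_eq_null μn (i := boxIndex N u)
      (F := fun lam => lam (boxIndex N v) * lam (boxIndex N (s - v)) * K) (by fun_prop)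
      (fun x y => by simp only [update_of_ne hvi, update_of_ne hsvi]) (boxIndex N (s - u)))
  have := h.mul_apply_sub_eq (norm_illumExt N lam) hu hv
  rwa [illumExt_of_inBox lam (hbox hu), illumExt_of_inBox lam (hbox hv),
    illumExt_of_inBox lam (hbox hsymm.1), illumExt_of_inBox lam (hbox hsymm.2)] at this

theorem illuminated_shifts_not_conjugate_symmetric_general
    (d : ℕ) (N : Fin d → ℕ)
    (f : (Fin d → ℤ) → ℂ)
    (hfsupp : ∀ n, ¬ inBox N n → f n = 0)
    (hthree : ∃ a b c : Fin d → ℤ, a ≠ b ∧ a ≠ c ∧ b ≠ c ∧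
      f a ≠ 0 ∧ f b ≠ 0 ∧ f c ≠ 0)
    (μn : (∀ j, Fin (N j + 1)) → Measure Circle)
    [∀ n, IsProbabilityMeasure (μn n)] [∀ n, NullSingletonClass (μn n)] :
    ∀ᵐ lam ∂(Measure.pi μn), ∀ t : Fin d → ℤ,
      ¬ ConjSymmetricArr (fun n => illumExt N lam (t + n) * f (t + n)) ∧
      ¬ ConjSymmetricArr (fun n => (starRingEnd ℂ) (illumExt N lam (t - n) * f (t - n))) := by
  have hsymm := ae_all_iff.2 (ae_not_conjSymmetricAbout_illumExt_mul hfsupp hthree μn)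
  filter_upwards [hsymm] with lam hlam t
  exact ⟨fun h => (h.exists_conjSymmetricAbout_of_shift).elim hlam,
    fun h => (h.exists_conjSymmetricAbout_of_conj_reflect).elim hlam⟩

/-- For an image with at least three nonzero pixels, almost surely no
shift of the randomly illuminated image, nor of its conjugate inversion, is conjugate
symmetric. -/
theorem illuminated_shifts_not_conjugate_symmetric
    (d : ℕ) (hd : 1 ≤ d) (N : Fin d → ℕ) (hN : ∀ j, 1 ≤ N j)
    (f : (Fin d → ℤ) → ℂ)
    (hfsupp : ∀ n, ¬ inBox N n → f n = 0)
    (hthree : ∃ a b c : Fin d → ℤ, a ≠ b ∧ a ≠ c ∧ b ≠ c ∧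
      f a ≠ 0 ∧ f b ≠ 0 ∧ f c ≠ 0)
    (μn : (∀ j, Fin (N j + 1)) → Measure Circle)
    [∀ n, IsProbabilityMeasure (μn n)] [∀ n, NullSingletonClass (μn n)] :
    ∀ᵐ lam ∂(Measure.pi μn), ∀ t : Fin d → ℤ,
      ¬ ConjSymmetricArr (fun n => illumExt N lam (t + n) * f (t + n)) ∧
      ¬ ConjSymmetricArr (fun n => (starRingEnd ℂ) (illumExt N lam (t - n) * f (t - n))) :=
  illuminated_shifts_not_conjugate_symmetric_general d N f hfsupp hthree μn
end
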